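/- arXiv:2508.20059 — 4 statements merged into one kernel-verified Lean document; each statement's English description precedes it below -/
import Mathlib

section
/- Let μ be a probability measure on a measurable space X and let g : X → ℝ be a bounded measurable function. Then the log moment generating function satisfies log ∫_X e^{g} dμ = sup over all probability measures p on X of ( ∫_X g dp − KL(p‖μ) ). -/
open MeasureTheory Classical

/-- Kullback–Leibler divergence: `∫ log(dp/dq) dp` when `p ≪ q` (and the
integrand is `p`-integrable), and `+∞` otherwise. -/
noncomputable def klDiv {Ω : Type*} [MeasurableSpace Ω] (p q : Measure Ω) : EReal :=
  if p ≪ q ∧ Integrable (fun ω => Real.log (p.rnDeriv q ω).toReal) p then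
    ((∫ ω, Real.log (p.rnDeriv q ω).toReal ∂p : ℝ) : EReal)
  else ⊤

/-!
Write `Z = ∫ exp g dμ` and let `q = μ.tilted g`, the probability measure with density `exp g / Z`.
Then `log (dp/dμ) = log (dp/dq) + g - log Z`, so `∫ g dp - KL(p‖μ) = log Z - KL(p‖q)`.
Gibbs' inequality `KL(p‖q) ≥ 0` gives the upper bound, with equality at `p = q`.
-/

open Real

section

variable {X : Type*} [MeasurableSpace X]

lemma klDiv_of_ac_of_integrable {p q : Measure X} (hpq : p ≪ q) (hint : Integrable (llr p q) p) :
    klDiv p q = ((∫ x, llr p q x ∂p : ℝ) : EReal) :=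
  if_pos ⟨hpq, hint⟩

lemma klDiv_eq_top {p q : Measure X} (h : ¬(p ≪ q ∧ Integrable (llr p q) p)) : klDiv p q = ⊤ :=
  if_neg h

lemma integral_llr_nonneg {p q : Measure X} [IsProbabilityMeasure p] [IsProbabilityMeasure q]
    (hpq : p ≪ q) (hint : Integrable (llr p q) p) : 0 ≤ ∫ x, llr p q x ∂p := by
  simpa using InformationTheory.integral_llr_add_sub_measure_univ_nonneg hpq hint

variable {μ : Measure X} [SigmaFinite μ] [NeZero μ] {g : X → ℝ}

lemma integral_sub_klDiv_le_log_integral_exp {p : Measure X} [IsProbabilityMeasure p]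
    (hgp : Integrable g p) (hgμ : Integrable (fun x => exp (g x)) μ) :
    ((∫ x, g x ∂p : ℝ) : EReal) - klDiv p μ ≤ (log (∫ x, exp (g x) ∂μ) : EReal) := by
  by_cases h : p ≪ μ ∧ Integrable (llr p μ) p
  · obtain ⟨hpμ, hint⟩ := h
    have := isProbabilityMeasure_tilted hgμ
    have gibbs := integral_llr_nonneg (hpμ.trans (absolutelyContinuous_tilted hgμ))
      (integrable_llr_tilted_right hpμ hgp hint hgμ)
    rw [integral_llr_tilted_right hpμ hgp hgμ hint] at gibbs
    rw [klDiv_of_ac_of_integrable hpμ hint, ← EReal.coe_sub, EReal.coe_le_coe_iff]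
    linarith
  · rw [klDiv_eq_top h, EReal.sub_top]
    exact bot_le

lemma integral_sub_klDiv_tilted (hgμ : Integrable (fun x => exp (g x)) μ)
    (hgq : Integrable g (μ.tilted g)) :
    ((∫ x, g x ∂(μ.tilted g) : ℝ) : EReal) - klDiv (μ.tilted g) μ =
      (log (∫ x, exp (g x) ∂μ) : EReal) := by
  have := isProbabilityMeasure_tilted hgμ
  have hqμ := tilted_absolutelyContinuous μ g
  have hllr : llr (μ.tilted g) μ =ᵐ[μ.tilted g] fun x => g x - log (∫ x, exp (g x) ∂μ) :=
    hqμ.ae_le (log_rnDeriv_tilted_left_self hgμ)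
  rw [klDiv_of_ac_of_integrable hqμ ((integrable_congr hllr).mpr (hgq.sub (integrable_const _))),
    integral_congr_ae hllr, integral_sub hgq (integrable_const _), ← EReal.coe_sub]
  simp

end

theorem log_mgf_eq_sup_kl {X : Type*} [MeasurableSpace X]
    (μ : Measure X) [IsProbabilityMeasure μ]
    (g : X → ℝ) (hg : Measurable g) (hb : ∃ C : ℝ, ∀ x, |g x| ≤ C) :
    (Real.log (∫ x, Real.exp (g x) ∂μ) : EReal) =
      ⨆ (p : Measure X) (_ : IsProbabilityMeasure p),
        (((∫ x, g x ∂p : ℝ) : EReal) - klDiv p μ) := by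
  obtain ⟨C, hC⟩ := hb
  have hg_int (ν : Measure X) [IsFiniteMeasure ν] : Integrable g ν :=
    .of_bound hg.aestronglyMeasurable C (ae_of_all _ hC)
  have hexp_int : Integrable (fun x => exp (g x)) μ :=
    .of_bound hg.exp.aestronglyMeasurable (exp C) (ae_of_all _ fun x => by
      rw [norm_of_nonneg (exp_pos _).le, exp_le_exp]
      exact (abs_le.mp (hC x)).2)
  have := isProbabilityMeasure_tilted hexp_int
  apply le_antisymm
  · rw [← integral_sub_klDiv_tilted hexp_int (hg_int _)]
    exact le_iSup₂_of_le (μ.tilted g) this le_rfl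
  · exact iSup₂_le fun p _ => integral_sub_klDiv_le_log_integral_exp (hg_int p) hexp_int
end

section
/- Let μ be a probability measure on a measurable space X and let g : X → ℝ be a bounded measurable function, so that Λ := log ∫_X e^{g} dμ is finite. Then the supremum sup_p { ∫ g dp − KL(p‖μ) } over probability measures p on X is attained by the probability measure p* that is absolutely continuous with respect to μ with density dp*/dμ = e^{g − Λ}; that is, ∫ g dp* − KL(p*‖μ) = Λ. -/
open MeasureTheory Classical

/-! Since `exp (g - Λ) = exp g / ∫ exp g dμ`, the measure `p*` is the exponential tilt
`μ.tilted g`, whose log-density with respect to `μ` is `g - Λ`. Hence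
`KL(p*‖μ) = ∫ g dp* - Λ`, and the Gibbs functional at `p*` equals `Λ`. -/

open Real

namespace MeasureTheory

variable {α : Type*} [MeasurableSpace α] {μ : Measure α} {f : α → ℝ}

lemma withDensity_exp_sub_log_integral_exp_eq_tilted [NeZero μ]
    (hf : Integrable (fun x ↦ exp (f x)) μ) :
    μ.withDensity (fun x ↦ ENNReal.ofReal (exp (f x - log (∫ x, exp (f x) ∂μ))))
      = μ.tilted f := by
  simp only [exp_sub, exp_log (integral_exp_pos hf), Measure.tilted]

lemma klDiv_tilted_self [SigmaFinite μ] [NeZero μ] (hf : Integrable (fun x ↦ exp (f x)) μ)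
    (hf_tilted : Integrable f (μ.tilted f)) :
    klDiv (μ.tilted f) μ = ((∫ x, f x ∂μ.tilted f - log (∫ x, exp (f x) ∂μ) : ℝ) : EReal) := by
  have := isProbabilityMeasure_tilted hf
  have hlog : (fun x ↦ log ((μ.tilted f).rnDeriv μ x).toReal)
      =ᵐ[μ.tilted f] fun x ↦ f x - log (∫ x, exp (f x) ∂μ) :=
    (tilted_absolutelyContinuous μ f).ae_le (log_rnDeriv_tilted_left_self hf)
  have hlog_int : Integrable (fun x ↦ log ((μ.tilted f).rnDeriv μ x).toReal) (μ.tilted f) :=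
    (hf_tilted.sub (integrable_const _)).congr hlog.symm
  rw [klDiv, if_pos ⟨tilted_absolutelyContinuous μ f, hlog_int⟩, integral_congr_ae hlog,
    integral_sub hf_tilted (integrable_const _), integral_const, probReal_univ, smul_eq_mul,
    one_mul]

lemma integral_sub_klDiv_tilted_self [SigmaFinite μ] [NeZero μ]
    (hf : Integrable (fun x ↦ exp (f x)) μ) (hf_tilted : Integrable f (μ.tilted f)) :
    ((∫ x, f x ∂μ.tilted f : ℝ) : EReal) - klDiv (μ.tilted f) μ
      = (log (∫ x, exp (f x) ∂μ) : EReal) := by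
  rw [klDiv_tilted_self hf hf_tilted, ← EReal.coe_sub, sub_sub_cancel]

lemma integrable_of_abs_le [IsFiniteMeasure μ] (hf : Measurable f) {C : ℝ}
    (hC : ∀ x, |f x| ≤ C) : Integrable f μ :=
  Integrable.of_bound hf.aestronglyMeasurable C (ae_of_all _ hC)

lemma integrable_exp_of_abs_le [IsFiniteMeasure μ] (hf : Measurable f) {C : ℝ}
    (hC : ∀ x, |f x| ≤ C) : Integrable (fun x ↦ exp (f x)) μ :=
  integrable_of_abs_le hf.exp fun x ↦ by
    rw [abs_of_pos (exp_pos _)]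
    exact exp_le_exp.2 (abs_le.1 (hC x)).2

end MeasureTheory

/-- The supremum `sup_p { ∫ g dp − KL(p‖μ) }` is attained by the probability
measure `p*` with density `dp*/dμ = exp (g − Λ)`, where `Λ = log ∫ e^g dμ`:
one has `∫ g dp* − KL(p*‖μ) = Λ`. -/
theorem log_mgf_sup_attained {X : Type*} [MeasurableSpace X]
    (μ : Measure X) [IsProbabilityMeasure μ]
    (g : X → ℝ) (hg : Measurable g) (hb : ∃ C : ℝ, ∀ x, |g x| ≤ C)
    (Λ : ℝ) (hΛ : Λ = Real.log (∫ x, Real.exp (g x) ∂μ))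
    (pstar : Measure X)
    (hpstar : pstar = μ.withDensity (fun x => ENNReal.ofReal (Real.exp (g x - Λ)))) :
    IsProbabilityMeasure pstar ∧ pstar ≪ μ ∧
      (((∫ x, g x ∂pstar : ℝ) : EReal) - klDiv pstar μ) = (Λ : EReal) := by
  obtain ⟨C, hC⟩ := hb
  have hexp := integrable_exp_of_abs_le (μ := μ) hg hC
  have hpstar_tilted : pstar = μ.tilted g := by
    rw [hpstar, hΛ, withDensity_exp_sub_log_integral_exp_eq_tilted hexp]
  subst hpstar_tilted hΛ
  have := isProbabilityMeasure_tilted hexp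
  exact ⟨inferInstance, tilted_absolutelyContinuous μ g,
    integral_sub_klDiv_tilted_self hexp (integrable_of_abs_le hg hC)⟩
end

section
/- Define the probability measure π* on X×Y by its density with respect to μ1⊗μ2: dπ*/d(μ1⊗μ2)(x,y) = exp( (ℓ(x,y) − B(x)) / ε ), where B(x) = ε log ∫_Y exp(ℓ(x,y)/ε) dμ2(y). Then π* has first marginal μ1 and attains the infimum of ε·KL(π‖μ1⊗μ2) − ∫_{X×Y} ℓ dπ over all Borel probability measures π on X×Y with first marginal μ1; that is, ε·KL(π*‖μ1⊗μ2) − ∫ ℓ dπ* = −∫_X B dμ1. -/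
open MeasureTheory Classical

/-! Write `ν = μ1 ⊗ μ2` and `h = (ℓ - B ∘ fst) / ε = ℓ / ε - log Z(x)`, where
`Z(x) = ∫ exp (ℓ (x, ·) / ε) dμ2`. For every `x` the density `exp h (x, ·)` integrates to one
against `μ2`, so `π*` has first marginal `μ1` and is the tilt `ν.tilted h`, whose normaliser
`∫ exp h dν` is `1`.

For any probability measure `π ≪ ν`, `KL(π‖ν) = KL(π‖ν.tilted h) + ∫ h dπ - log ∫ exp h dν`, so
Gibbs' inequality gives `KL(π‖ν) ≥ ∫ h dπ`, with equality at `π = ν.tilted h`. If `π` has first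
marginal `μ1`, then `ε ∫ h dπ - ∫ ℓ dπ = -∫ B dμ1`; this is the common value of the lower bound
and of the objective at `π*`. -/

open Real (exp log)

section BoundedExp

variable {α : Type*} [MeasurableSpace α] {μ : Measure α} {f : α → ℝ} {C : ℝ}

theorem integrable_of_abs_le [IsFiniteMeasure μ] (hf : AEStronglyMeasurable f μ)
    (hC : ∀ x, |f x| ≤ C) : Integrable f μ :=
  .of_bound hf C (ae_of_all _ fun x => (Real.norm_eq_abs _).trans_le (hC x))

theorem integrable_exp_of_abs_le [IsFiniteMeasure μ] (hf : AEStronglyMeasurable f μ)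
    (hC : ∀ x, |f x| ≤ C) : Integrable (fun x => exp (f x)) μ :=
  integrable_of_abs_le (Real.continuous_exp.comp_aestronglyMeasurable hf) fun x => by
    rw [abs_of_pos (Real.exp_pos _)]
    exact Real.exp_le_exp.2 (abs_le.1 (hC x)).2

theorem abs_log_integral_exp_le [IsProbabilityMeasure μ] (hf : AEStronglyMeasurable f μ)
    (hC : ∀ x, |f x| ≤ C) : |log (∫ x, exp (f x) ∂μ)| ≤ C := by
  have hint := integrable_exp_of_abs_le hf hC
  have hlower : exp (-C) ≤ ∫ x, exp (f x) ∂μ := by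
    simpa using integral_mono (integrable_const _) hint
      fun x => Real.exp_le_exp.2 (abs_le.1 (hC x)).1
  have hupper : ∫ x, exp (f x) ∂μ ≤ exp C := by
    simpa using integral_mono hint (integrable_const _)
      fun x => Real.exp_le_exp.2 (abs_le.1 (hC x)).2
  have hpos : 0 < ∫ x, exp (f x) ∂μ := (Real.exp_pos _).trans_le hlower
  exact abs_le.2 ⟨(Real.le_log_iff_exp_le hpos).2 hlower, (Real.log_le_iff_le_exp hpos).2 hupper⟩

theorem integral_exp_sub_log_integral_exp [NeZero μ] (hf : Integrable (fun x => exp (f x)) μ) :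
    ∫ x, exp (f x - log (∫ x, exp (f x) ∂μ)) ∂μ = 1 := by
  simp_rw [Real.exp_sub, Real.exp_log (integral_exp_pos hf)]
  rw [integral_div, div_self (integral_exp_pos hf).ne']

end BoundedExp

section GibbsVariational

variable {α : Type*} [MeasurableSpace α] {π ν : Measure α} {h : α → ℝ}

theorem klDiv_of_ac_of_integrable_s3 (hπν : π ≪ ν) (hllr : Integrable (llr π ν) π) :
    klDiv π ν = ((∫ x, llr π ν x ∂π : ℝ) : EReal) :=
  if_pos ⟨hπν, hllr⟩

theorem klDiv_of_not_ac_or_not_integrable (h : ¬(π ≪ ν ∧ Integrable (llr π ν) π)) :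
    klDiv π ν = ⊤ :=
  if_neg h

theorem klDiv_tilted_self [SigmaFinite ν] [NeZero ν] (hh : Integrable h (ν.tilted h))
    (hexp : Integrable (fun x => exp (h x)) ν) :
    klDiv (ν.tilted h) ν = ((∫ x, h x ∂ν.tilted h - log (∫ x, exp (h x) ∂ν) : ℝ) : EReal) := by
  have : IsProbabilityMeasure (ν.tilted h) := isProbabilityMeasure_tilted hexp
  have hllr : llr (ν.tilted h) ν =ᵐ[ν.tilted h] fun x => h x - log (∫ x, exp (h x) ∂ν) := by
    refine (tilted_absolutelyContinuous ν h).ae_le ?_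
    filter_upwards [llr_tilted_left Measure.AbsolutelyContinuous.rfl hexp
      (Real.aemeasurable_of_aemeasurable_exp hexp.1.aemeasurable), llr_self ν] with x hx hself
    simp [hx, hself]
  rw [klDiv_of_ac_of_integrable_s3 (tilted_absolutelyContinuous ν h)
    ((hh.sub (integrable_const _)).congr hllr.symm), integral_congr_ae hllr,
    integral_sub hh (integrable_const _), integral_const, probReal_univ, one_smul]

theorem integral_sub_log_integral_exp_le_klDiv [IsProbabilityMeasure π] [SigmaFinite ν]
    (hh : Integrable h π) (hexp : Integrable (fun x => exp (h x)) ν) :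
    ((∫ x, h x ∂π - log (∫ x, exp (h x) ∂ν) : ℝ) : EReal) ≤ klDiv π ν := by
  by_cases hfin : π ≪ ν ∧ Integrable (llr π ν) π
  · obtain ⟨hπν, hllr⟩ := hfin
    rw [klDiv_of_ac_of_integrable_s3 hπν hllr]
    have : NeZero ν := ⟨fun hν => by simpa using hπν (by simp [hν] : ν Set.univ = 0)⟩
    have : IsProbabilityMeasure (ν.tilted h) := isProbabilityMeasure_tilted hexp
    have gibbs := InformationTheory.integral_llr_add_sub_measure_univ_nonneg
      (hπν.trans (absolutelyContinuous_tilted hexp))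
      (integrable_llr_tilted_right hπν hh hllr hexp)
    rw [integral_llr_tilted_right hπν hh hexp hllr] at gibbs
    simp only [probReal_univ] at gibbs
    exact EReal.coe_le_coe_iff.2 (by linarith)
  · rw [klDiv_of_not_ac_or_not_integrable hfin]
    exact le_top

end GibbsVariational

section GibbsCoupling

variable {X Y : Type*} [MeasurableSpace X] [MeasurableSpace Y] {μ : Measure X} {ν : Measure Y}
  {g : X × Y → ℝ} {C : ℝ}

noncomputable def logPartition (ν : Measure Y) (g : X × Y → ℝ) (x : X) : ℝ :=
  log (∫ y, exp (g (x, y)) ∂ν)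

noncomputable def gibbsCoupling (μ : Measure X) (ν : Measure Y) (g : X × Y → ℝ) :
    Measure (X × Y) :=
  (μ.prod ν).withDensity fun p => ENNReal.ofReal (exp (g p - logPartition ν g p.1))

theorem measurable_logPartition [SFinite ν] (hg : Measurable g) :
    Measurable (logPartition ν g) :=
  Real.measurable_log.comp
    (Real.measurable_exp.comp hg).stronglyMeasurable.integral_prod_right'.measurable

theorem measurable_sub_logPartition [SFinite ν] (hg : Measurable g) :
    Measurable fun p : X × Y => g p - logPartition ν g p.1 :=
  hg.sub ((measurable_logPartition hg).comp measurable_fst)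

variable [IsProbabilityMeasure ν]

theorem abs_logPartition_le (hg : Measurable g) (hC : ∀ p, |g p| ≤ C) (x : X) :
    |logPartition ν g x| ≤ C :=
  abs_log_integral_exp_le (hg.comp measurable_prodMk_left).aestronglyMeasurable fun _ => hC _

theorem abs_sub_logPartition_le (hg : Measurable g) (hC : ∀ p, |g p| ≤ C) (p : X × Y) :
    |g p - logPartition ν g p.1| ≤ 2 * C := by
  have := (abs_sub _ _).trans (add_le_add (hC p) (abs_logPartition_le (ν := ν) hg hC p.1))
  linarith

theorem integrable_sub_logPartition {π : Measure (X × Y)} [IsFiniteMeasure π] (hg : Measurable g)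
    (hC : ∀ p, |g p| ≤ C) : Integrable (fun p => g p - logPartition ν g p.1) π :=
  integrable_of_abs_le (measurable_sub_logPartition hg).aestronglyMeasurable
    (abs_sub_logPartition_le hg hC)

theorem integral_exp_sub_logPartition (hg : Measurable g) (hC : ∀ p, |g p| ≤ C) (x : X) :
    ∫ y, exp (g (x, y) - logPartition ν g x) ∂ν = 1 :=
  integral_exp_sub_log_integral_exp <|
    integrable_exp_of_abs_le (hg.comp measurable_prodMk_left).aestronglyMeasurable fun _ => hC _

theorem integrable_exp_sub_logPartition {π : Measure (X × Y)} [IsFiniteMeasure π]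
    (hg : Measurable g) (hC : ∀ p, |g p| ≤ C) :
    Integrable (fun p => exp (g p - logPartition ν g p.1)) π :=
  integrable_exp_of_abs_le (measurable_sub_logPartition hg).aestronglyMeasurable
    (abs_sub_logPartition_le hg hC)

theorem lintegral_exp_sub_logPartition (hg : Measurable g) (hC : ∀ p, |g p| ≤ C) (x : X) :
    ∫⁻ y, ENNReal.ofReal (exp (g (x, y) - logPartition ν g x)) ∂ν = 1 := by
  have hint : Integrable (fun y => exp (g (x, y) - logPartition ν g x)) ν :=
    integrable_exp_of_abs_le
      ((measurable_sub_logPartition hg).comp measurable_prodMk_left).aestronglyMeasurable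
      fun y => abs_sub_logPartition_le hg hC (x, y)
  rw [← ofReal_integral_eq_lintegral_ofReal hint (ae_of_all _ fun _ => (Real.exp_pos _).le),
    integral_exp_sub_logPartition hg hC, ENNReal.ofReal_one]

theorem integral_exp_sub_logPartition_prod [IsProbabilityMeasure μ] (hg : Measurable g)
    (hC : ∀ p, |g p| ≤ C) : ∫ p, exp (g p - logPartition ν g p.1) ∂μ.prod ν = 1 := by
  rw [integral_prod _ (integrable_exp_sub_logPartition hg hC)]
  simp [integral_exp_sub_logPartition hg hC]

theorem integral_sub_logPartition_of_map_fst_eq {π : Measure (X × Y)} [IsFiniteMeasure π]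
    (hπ : π.map Prod.fst = μ) (hg : Measurable g) (hC : ∀ p, |g p| ≤ C) :
    ∫ p, (g p - logPartition ν g p.1) ∂π = ∫ p, g p ∂π - ∫ x, logPartition ν g x ∂μ := by
  have hL := measurable_logPartition (ν := ν) hg
  rw [integral_sub (integrable_of_abs_le hg.aestronglyMeasurable hC)
    (integrable_of_abs_le (f := fun p => logPartition ν g p.1)
      (hL.comp measurable_fst).aestronglyMeasurable fun p => abs_logPartition_le hg hC p.1),
    ← hπ, integral_map measurable_fst.aemeasurable hL.aestronglyMeasurable]

theorem map_fst_gibbsCoupling [SFinite μ] (hg : Measurable g) (hC : ∀ p, |g p| ≤ C) :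
    (gibbsCoupling μ ν g).map Prod.fst = μ := by
  have hdens : Measurable fun p => ENNReal.ofReal (exp (g p - logPartition ν g p.1)) :=
    (measurable_sub_logPartition hg).exp.ennreal_ofReal
  ext s hs
  rw [Measure.map_apply measurable_fst hs, gibbsCoupling, withDensity_apply _ (measurable_fst hs),
    ← Set.prod_univ, ← Measure.prod_restrict, Measure.restrict_univ,
    lintegral_prod _ hdens.aemeasurable]
  simp [lintegral_exp_sub_logPartition hg hC]

variable [IsProbabilityMeasure μ]

theorem gibbsCoupling_eq_tilted (hg : Measurable g) (hC : ∀ p, |g p| ≤ C) :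
    gibbsCoupling μ ν g = (μ.prod ν).tilted fun p => g p - logPartition ν g p.1 := by
  simp_rw [gibbsCoupling, Measure.tilted, integral_exp_sub_logPartition_prod hg hC, div_one]

theorem isProbabilityMeasure_gibbsCoupling (hg : Measurable g) (hC : ∀ p, |g p| ≤ C) :
    IsProbabilityMeasure (gibbsCoupling μ ν g) := by
  rw [gibbsCoupling_eq_tilted hg hC]
  exact isProbabilityMeasure_tilted (integrable_exp_sub_logPartition hg hC)

theorem klDiv_gibbsCoupling (hg : Measurable g) (hC : ∀ p, |g p| ≤ C) :
    klDiv (gibbsCoupling μ ν g) (μ.prod ν) =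
      ((∫ p, (g p - logPartition ν g p.1) ∂gibbsCoupling μ ν g : ℝ) : EReal) := by
  have := isProbabilityMeasure_gibbsCoupling (μ := μ) (ν := ν) hg hC
  have hh := integrable_sub_logPartition (ν := ν) (π := gibbsCoupling μ ν g) hg hC
  rw [gibbsCoupling_eq_tilted hg hC] at hh ⊢
  rw [klDiv_tilted_self hh (integrable_exp_sub_logPartition hg hC),
    integral_exp_sub_logPartition_prod hg hC, Real.log_one, sub_zero]

theorem integral_sub_logPartition_le_klDiv {π : Measure (X × Y)} [IsProbabilityMeasure π]
    (hg : Measurable g) (hC : ∀ p, |g p| ≤ C) :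
    ((∫ p, (g p - logPartition ν g p.1) ∂π : ℝ) : EReal) ≤ klDiv π (μ.prod ν) := by
  simpa [integral_exp_sub_logPartition_prod hg hC] using
    integral_sub_log_integral_exp_le_klDiv (integrable_sub_logPartition (ν := ν) hg hC)
      (integrable_exp_sub_logPartition (π := μ.prod ν) hg hC)

end GibbsCoupling

theorem mcot_dual_inf_attained_general
    {X Y : Type*} [MetricSpace X] [MeasurableSpace X] [BorelSpace X]
    [MetricSpace Y] [CompactSpace Y] [MeasurableSpace Y] [BorelSpace Y]
    (μ1 : Measure X) [IsProbabilityMeasure μ1] (μ2 : Measure Y) [IsProbabilityMeasure μ2]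
    (ε : ℝ) (hε : 0 < ε)
    (ℓ : X × Y → ℝ) (hℓ : Continuous ℓ) (hbd : ∃ C : ℝ, ∀ p, |ℓ p| ≤ C)
    (B : X → ℝ) (hB : ∀ x, B x = ε * Real.log (∫ y, Real.exp (ℓ (x, y) / ε) ∂μ2))
    (πstar : Measure (X × Y))
    (hπstar : πstar = (μ1.prod μ2).withDensity
      (fun p => ENNReal.ofReal (Real.exp ((ℓ p - B p.1) / ε)))) :
    IsProbabilityMeasure πstar ∧ πstar.map Prod.fst = μ1 ∧
      ((ε : EReal) * klDiv πstar (μ1.prod μ2) - ((∫ p, ℓ p ∂πstar : ℝ) : EReal))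
        = ((-∫ x, B x ∂μ1 : ℝ) : EReal) ∧
      (∀ (π : Measure (X × Y)), IsProbabilityMeasure π → π.map Prod.fst = μ1 →
        ((ε : EReal) * klDiv πstar (μ1.prod μ2) - ((∫ p, ℓ p ∂πstar : ℝ) : EReal))
          ≤ ((ε : EReal) * klDiv π (μ1.prod μ2) - ((∫ p, ℓ p ∂π : ℝ) : EReal))) := by
  obtain ⟨C, hC⟩ := hbd
  set g : X × Y → ℝ := fun p => ℓ p / ε
  have hg : Measurable g := hℓ.measurable.div_const ε
  have hgC : ∀ p, |g p| ≤ C / ε := fun p => by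
    simpa [g, abs_div, abs_of_pos hε] using div_le_div_of_nonneg_right (hC p) hε.le
  have hBL : B = fun x => ε * logPartition μ2 g x := funext hB
  have hπg : πstar = gibbsCoupling μ1 μ2 g := by
    simp only [hπstar, gibbsCoupling, hBL, g, sub_div, mul_div_cancel_left₀ _ hε.ne']
  have hpot : ∀ (π : Measure (X × Y)) [IsProbabilityMeasure π], π.map Prod.fst = μ1 →
      ε * ∫ p, (g p - logPartition μ2 g p.1) ∂π - ∫ p, ℓ p ∂π = -∫ x, B x ∂μ1 := by
    intro π _ hπ
    rw [integral_sub_logPartition_of_map_fst_eq hπ hg hgC, hBL, integral_const_mul,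
      integral_div]
    field_simp
    ring
  subst hπg
  have hprob : IsProbabilityMeasure (gibbsCoupling μ1 μ2 g) :=
    isProbabilityMeasure_gibbsCoupling hg hgC
  have hmarg : (gibbsCoupling μ1 μ2 g).map Prod.fst = μ1 := map_fst_gibbsCoupling hg hgC
  have hvalue : (ε : EReal) * klDiv (gibbsCoupling μ1 μ2 g) (μ1.prod μ2)
      - ((∫ p, ℓ p ∂gibbsCoupling μ1 μ2 g : ℝ) : EReal) = ((-∫ x, B x ∂μ1 : ℝ) : EReal) := by
    rw [klDiv_gibbsCoupling hg hgC, ← hpot _ hmarg, EReal.coe_sub, EReal.coe_mul]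
  refine ⟨hprob, hmarg, hvalue, fun π _ hπ => ?_⟩
  rw [hvalue, ← hpot π hπ, EReal.coe_sub, EReal.coe_mul]
  exact EReal.sub_le_sub (mul_le_mul_of_nonneg_left (integral_sub_logPartition_le_klDiv hg hgC)
    (EReal.coe_nonneg.2 hε.le)) le_rfl

/-- The measure `π*` with density `dπ*/d(μ1⊗μ2)(x,y) = exp((ℓ(x,y) − B(x))/ε)`
is a probability measure with first marginal `μ1`, and it attains the infimum of
`ε·KL(π‖μ1⊗μ2) − ∫ ℓ dπ` over probability measures with first marginal `μ1`:
its value is `−∫ B dμ1`. -/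
theorem mcot_dual_inf_attained
    {X Y : Type*} [MetricSpace X] [CompactSpace X] [MeasurableSpace X] [BorelSpace X]
    [MetricSpace Y] [CompactSpace Y] [MeasurableSpace Y] [BorelSpace Y]
    (μ1 : Measure X) [IsProbabilityMeasure μ1] (μ2 : Measure Y) [IsProbabilityMeasure μ2]
    (ε : ℝ) (hε : 0 < ε)
    (ℓ : X × Y → ℝ) (hℓ : Continuous ℓ) (hbd : ∃ C : ℝ, ∀ p, |ℓ p| ≤ C)
    (B : X → ℝ) (hB : ∀ x, B x = ε * Real.log (∫ y, Real.exp (ℓ (x, y) / ε) ∂μ2))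
    (πstar : Measure (X × Y))
    (hπstar : πstar = (μ1.prod μ2).withDensity
      (fun p => ENNReal.ofReal (Real.exp ((ℓ p - B p.1) / ε)))) :
    IsProbabilityMeasure πstar ∧ πstar.map Prod.fst = μ1 ∧
      ((ε : EReal) * klDiv πstar (μ1.prod μ2) - ((∫ p, ℓ p ∂πstar : ℝ) : EReal))
        = ((-∫ x, B x ∂μ1 : ℝ) : EReal) ∧
      (∀ (π : Measure (X × Y)), IsProbabilityMeasure π → π.map Prod.fst = μ1 →
        ((ε : EReal) * klDiv πstar (μ1.prod μ2) - ((∫ p, ℓ p ∂πstar : ℝ) : EReal))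
          ≤ ((ε : EReal) * klDiv π (μ1.prod μ2) - ((∫ p, ℓ p ∂π : ℝ) : EReal))) :=
  mcot_dual_inf_attained_general μ1 μ2 ε hε ℓ hℓ hbd B hB πstar hπstar
end

section
/- The function J : ℝ^A → ℝ defined by J(ζ) = ∫_X log( ∫_Y exp( ζᵀf(y) − ε^{-1} c(x,y) ) dμ2(y) ) dμ1(x) is convex and continuously differentiable on ℝ^A. -/
/-!
Write `Z(ζ, x) = ∫ exp(ζᵀf(y) - ε⁻¹ c(x, y)) dμ2(y)`, so that `J(ζ) = ∫ log Z(ζ, x) dμ1(x)`.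
The exponent is affine in `ζ`, so along a convex combination the integrand factors as
`exp(u)^t * exp(v)^s`, and Hölder's inequality with exponents `1/t, 1/s` makes `log Z(·, x)`
convex; integrating in `x` preserves convexity. For smoothness, every integrand and its
`ζ`-derivative are jointly continuous in the parameter and the integration variable, hence bounded
on (compact neighbourhood) × (compact space). So one may differentiate under the integral sign,
first in `y` and then, since `Z > 0`, in `x`, and the derivative is again a continuous parametric
integral.
-/

open MeasureTheory

theorem integral_rpow_mul_rpow_le {α : Type*} [MeasurableSpace α] {μ : Measure α}
    {f g : α → ℝ} (hf0 : 0 ≤ f) (hg0 : 0 ≤ g) (hf : Integrable f μ) (hg : Integrable g μ)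
    {t s : ℝ} (ht : 0 ≤ t) (hs : 0 ≤ s) (hts : t + s = 1) :
    ∫ a, f a ^ t * g a ^ s ∂μ ≤ (∫ a, f a ∂μ) ^ t * (∫ a, g a ∂μ) ^ s := by
  have hfg : AEStronglyMeasurable (fun a => f a ^ t * g a ^ s) μ :=
    (hf.1.aemeasurable.pow_const t |>.mul (hg.1.aemeasurable.pow_const s)).aestronglyMeasurable
  rw [integral_eq_lintegral_of_nonneg_ae
      (.of_forall fun a => mul_nonneg (Real.rpow_nonneg (hf0 a) t) (Real.rpow_nonneg (hg0 a) s))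
      hfg,
    integral_eq_lintegral_of_nonneg_ae (.of_forall hf0) hf.1,
    integral_eq_lintegral_of_nonneg_ae (.of_forall hg0) hg.1,
    ENNReal.toReal_rpow, ENNReal.toReal_rpow, ← ENNReal.toReal_mul]
  refine ENNReal.toReal_mono ?_ ?_
  · exact ENNReal.mul_ne_top (ENNReal.rpow_ne_top_of_nonneg ht hf.lintegral_lt_top.ne)
      (ENNReal.rpow_ne_top_of_nonneg hs hg.lintegral_lt_top.ne)
  calc ∫⁻ a, ENNReal.ofReal (f a ^ t * g a ^ s) ∂μ
      = ∫⁻ a, ENNReal.ofReal (f a) ^ t * ENNReal.ofReal (g a) ^ s ∂μ := by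
        congr 1 with a
        rw [ENNReal.ofReal_mul (Real.rpow_nonneg (hf0 a) t),
          ENNReal.ofReal_rpow_of_nonneg (hf0 a) ht, ENNReal.ofReal_rpow_of_nonneg (hg0 a) hs]
    _ ≤ _ := ENNReal.lintegral_mul_norm_pow_le hf.1.aemeasurable.ennreal_ofReal
        hg.1.aemeasurable.ennreal_ofReal ht hs hts

theorem convexOn_integral {E α : Type*} [AddCommGroup E] [Module ℝ E] [MeasurableSpace α]
    {μ : Measure α} {s : Set E} (hs : Convex ℝ s) {G : E → α → ℝ}
    (hG : ∀ a, ConvexOn ℝ s (G · a)) (hint : ∀ ζ ∈ s, Integrable (G ζ) μ) :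
    ConvexOn ℝ s (fun ζ => ∫ a, G ζ a ∂μ) := by
  refine ⟨hs, fun ζ₁ h₁ ζ₂ h₂ t u ht hu htu => ?_⟩
  have hi₁ := (hint ζ₁ h₁).const_mul t
  have hi₂ := (hint ζ₂ h₂).const_mul u
  calc ∫ a, G (t • ζ₁ + u • ζ₂) a ∂μ
      ≤ ∫ a, (t * G ζ₁ a + u * G ζ₂ a) ∂μ :=
        integral_mono (hint _ (hs h₁ h₂ ht hu htu)) (hi₁.add hi₂)
          fun a => (hG a).2 h₁ h₂ ht hu htu
    _ = t • ∫ a, G ζ₁ a ∂μ + u • ∫ a, G ζ₂ a ∂μ := by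
        rw [integral_add hi₁ hi₂, integral_const_mul, integral_const_mul, smul_eq_mul,
          smul_eq_mul]

theorem convexOn_log_integral_exp {E α : Type*} [AddCommGroup E] [Module ℝ E]
    [MeasurableSpace α] {μ : Measure α} [NeZero μ] (L : α → E →ₗ[ℝ] ℝ) (b : α → ℝ)
    (hint : ∀ ζ, Integrable (fun a => Real.exp (L a ζ + b a)) μ) :
    ConvexOn ℝ Set.univ (fun ζ => Real.log (∫ a, Real.exp (L a ζ + b a) ∂μ)) := by
  refine ⟨convex_univ, fun ζ₁ _ ζ₂ _ t u ht hu htu => ?_⟩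
  set Z : E → ℝ := fun ζ => ∫ a, Real.exp (L a ζ + b a) ∂μ
  have hZ : ∀ ζ, 0 < Z ζ := fun ζ => integral_exp_pos (hint ζ)
  have hsplit : ∀ a, Real.exp (L a (t • ζ₁ + u • ζ₂) + b a)
      = Real.exp (L a ζ₁ + b a) ^ t * Real.exp (L a ζ₂ + b a) ^ u := by
    intro a
    rw [← Real.exp_mul, ← Real.exp_mul, ← Real.exp_add, map_add, map_smul, map_smul,
      smul_eq_mul, smul_eq_mul]
    congr 1
    linear_combination -b a * htu
  have hholder : Z (t • ζ₁ + u • ζ₂) ≤ Z ζ₁ ^ t * Z ζ₂ ^ u := by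
    simp only [Z, hsplit]
    exact integral_rpow_mul_rpow_le (fun _ => (Real.exp_pos _).le)
      (fun _ => (Real.exp_pos _).le) (hint ζ₁) (hint ζ₂) ht hu htu
  calc Real.log (Z (t • ζ₁ + u • ζ₂))
      ≤ Real.log (Z ζ₁ ^ t * Z ζ₂ ^ u) := Real.log_le_log (hZ _) hholder
    _ = t • Real.log (Z ζ₁) + u • Real.log (Z ζ₂) := by
        rw [Real.log_mul (Real.rpow_pos_of_pos (hZ ζ₁) t).ne'
            (Real.rpow_pos_of_pos (hZ ζ₂) u).ne',
          Real.log_rpow (hZ ζ₁), Real.log_rpow (hZ ζ₂), smul_eq_mul, smul_eq_mul]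

theorem Continuous.integrable_of_compactSpace {α G : Type*} [TopologicalSpace α]
    [CompactSpace α] [MeasurableSpace α] [OpensMeasurableSpace α] {μ : Measure α}
    [IsFiniteMeasure μ] [NormedAddCommGroup G] {f : α → G} (hf : Continuous f) :
    Integrable f μ :=
  hf.integrable_of_hasCompactSupport (.of_compactSpace f)

section ParametricIntegral

variable {H α G : Type*} [NormedAddCommGroup H] [NormedSpace ℝ H]
  [TopologicalSpace α] [CompactSpace α] [SecondCountableTopology α] [MeasurableSpace α]
  [OpensMeasurableSpace α] {μ : Measure α} [IsFiniteMeasure μ]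
  [NormedAddCommGroup G] [NormedSpace ℝ G]

theorem continuous_integral_of_continuous_uncurry {Z : Type*} [TopologicalSpace Z]
    [FirstCountableTopology Z] [LocallyCompactSpace Z] {F : Z → α → G}
    (hF : Continuous F.uncurry) : Continuous fun z => ∫ a, F z a ∂μ := by
  simpa using continuous_parametric_integral_of_continuous (μ := μ) hF isCompact_univ

variable [LocallyCompactSpace H]

theorem hasFDerivAt_integral_of_continuous {F : H → α → G} {F' : H → α → H →L[ℝ] G}
    (hF : Continuous F.uncurry) (hF' : Continuous F'.uncurry)
    (hderiv : ∀ z a, HasFDerivAt (F · a) (F' z a) z) (z₀ : H) :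
    HasFDerivAt (fun z => ∫ a, F z a ∂μ) (∫ a, F' z₀ a ∂μ) z₀ := by
  obtain ⟨K, hK, hK₀⟩ := exists_compact_mem_nhds z₀
  obtain ⟨C, hC⟩ := (hK.prod isCompact_univ).exists_bound_of_continuousOn hF'.continuousOn
  have hFz : ∀ z, Continuous (F z) := fun z => hF.comp (Continuous.prodMk_right z)
  refine hasFDerivAt_integral_of_dominated_of_fderiv_le (bound := fun _ => C) hK₀
    (.of_forall fun z => (hFz z).aestronglyMeasurable) (hFz z₀).integrable_of_compactSpace
    (hF'.comp (Continuous.prodMk_right z₀)).aestronglyMeasurable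
    (.of_forall fun a z hz => hC (z, a) ⟨hz, Set.mem_univ a⟩) (integrable_const C)
    (.of_forall fun a z _ => hderiv z a)

theorem contDiff_one_integral_of_continuous {F : H → α → G} {F' : H → α → H →L[ℝ] G}
    (hF : Continuous F.uncurry) (hF' : Continuous F'.uncurry)
    (hderiv : ∀ z a, HasFDerivAt (F · a) (F' z a) z) :
    ContDiff ℝ 1 fun z => ∫ a, F z a ∂μ :=
  contDiff_one_iff_hasFDerivAt.2 ⟨fun z => ∫ a, F' z a ∂μ,
    continuous_integral_of_continuous_uncurry hF',
    hasFDerivAt_integral_of_continuous hF hF' hderiv⟩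

end ParametricIntegral

noncomputable def partitionFn {E X Y : Type*} [NormedAddCommGroup E] [NormedSpace ℝ E]
    [MeasurableSpace Y] (L : Y → E →L[ℝ] ℝ) (g : X × Y → ℝ) (μ : Measure Y) (ζ : E) (x : X) :
    ℝ :=
  ∫ y, Real.exp (L y ζ + g (x, y)) ∂μ

section PartitionFn

variable {E X Y : Type*} [NormedAddCommGroup E] [NormedSpace ℝ E] [TopologicalSpace X]
  [TopologicalSpace Y] [CompactSpace Y] [MeasurableSpace Y] [OpensMeasurableSpace Y]
  {L : Y → E →L[ℝ] ℝ} {g : X × Y → ℝ} (hL : Continuous L) (hg : Continuous g)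
  (μ : Measure Y) [IsFiniteMeasure μ]
include hL hg

theorem partitionFn_pos [NeZero μ] (ζ : E) (x : X) : 0 < partitionFn L g μ ζ x :=
  integral_exp_pos (by fun_prop : Continuous _).integrable_of_compactSpace

variable [SecondCountableTopology Y] [LocallyCompactSpace E]

theorem hasFDerivAt_partitionFn (ζ : E) (x : X) :
    HasFDerivAt (partitionFn L g μ · x) (∫ y, Real.exp (L y ζ + g (x, y)) • L y ∂μ) ζ :=
  hasFDerivAt_integral_of_continuous (by fun_prop) (by fun_prop)
    (fun ζ y => ((L y).hasFDerivAt.add_const _).exp) ζ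

variable [FirstCountableTopology X] [LocallyCompactSpace X]

theorem continuous_partitionFn : Continuous (partitionFn L g μ).uncurry :=
  continuous_integral_of_continuous_uncurry (F := fun (p : E × X) y => _) (by fun_prop)

theorem continuous_integral_exp_smul :
    Continuous fun p : E × X => ∫ y, Real.exp (L y p.1 + g (p.2, y)) • L y ∂μ :=
  continuous_integral_of_continuous_uncurry (F := fun (p : E × X) y => _) (by fun_prop)

theorem continuous_log_partitionFn [NeZero μ] :
    Continuous fun p : E × X => Real.log (partitionFn L g μ p.1 p.2) :=
  (continuous_partitionFn hL hg μ).log fun p => (partitionFn_pos hL hg μ p.1 p.2).ne'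

variable [CompactSpace X] [MeasurableSpace X] [OpensMeasurableSpace X]
  (ν : Measure X) [IsFiniteMeasure ν] [NeZero μ]

theorem convexOn_integral_log_partitionFn :
    ConvexOn ℝ Set.univ fun ζ => ∫ x, Real.log (partitionFn L g μ ζ x) ∂ν :=
  convexOn_integral convex_univ
    (fun x => convexOn_log_integral_exp (fun y => (L y : E →ₗ[ℝ] ℝ)) (fun y => g (x, y))
      fun ζ => (show Continuous fun y => Real.exp (L y ζ + g (x, y)) by fun_prop)
        |>.integrable_of_compactSpace)
    fun ζ _ => ((continuous_log_partitionFn hL hg μ).comp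
      (Continuous.prodMk_right ζ)).integrable_of_compactSpace

theorem contDiff_integral_log_partitionFn [SecondCountableTopology X] :
    ContDiff ℝ 1 fun ζ => ∫ x, Real.log (partitionFn L g μ ζ x) ∂ν :=
  contDiff_one_integral_of_continuous (continuous_log_partitionFn hL hg μ)
    (F' := fun ζ x => (partitionFn L g μ ζ x)⁻¹ • ∫ y, Real.exp (L y ζ + g (x, y)) • L y ∂μ)
    (((continuous_partitionFn hL hg μ).inv₀ fun p => (partitionFn_pos hL hg μ p.1 p.2).ne').smul
      (continuous_integral_exp_smul hL hg μ))
    fun ζ x => (hasFDerivAt_partitionFn hL hg μ ζ x).log (partitionFn_pos hL hg μ ζ x).ne'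

end PartitionFn

theorem mcot_dual_convex_C1_general
    {X Y : Type*} [MetricSpace X] [CompactSpace X] [MeasurableSpace X] [BorelSpace X]
    [MetricSpace Y] [CompactSpace Y] [MeasurableSpace Y] [BorelSpace Y]
    (μ1 : Measure X) [IsProbabilityMeasure μ1] (μ2 : Measure Y) [IsProbabilityMeasure μ2]
    (ε : ℝ)
    (c : X × Y → ℝ) (hc : Continuous c)
    (A : ℕ) (f : Y → Fin A → ℝ) (hf : Continuous f)
    (J : (Fin A → ℝ) → ℝ)
    (hJ : ∀ ζ, J ζ = ∫ x, Real.log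
      (∫ y, Real.exp ((∑ a, ζ a * f y a) - ε⁻¹ * c (x, y)) ∂μ2) ∂μ1) :
    ConvexOn ℝ Set.univ J ∧ ContDiff ℝ 1 J := by
  set L : Y → (Fin A → ℝ) →L[ℝ] ℝ := fun y => ∑ a, f y a • ContinuousLinearMap.proj a
  have hL : Continuous L := by fun_prop
  have hg : Continuous fun p => -(ε⁻¹ * c p) := by fun_prop
  have hJZ : J = fun ζ => ∫ x, Real.log (partitionFn L (fun p => -(ε⁻¹ * c p)) μ2 ζ x) ∂μ1 := by
    funext ζ
    simp [hJ, partitionFn, L, sub_eq_add_neg, mul_comm]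
  rw [hJZ]
  exact ⟨convexOn_integral_log_partitionFn hL hg μ2 μ1,
    contDiff_integral_log_partitionFn hL hg μ2 μ1⟩

/-- The dual function
`J(ζ) = ∫ log(∫ exp(ζᵀf(y) − ε⁻¹ c(x,y)) dμ2(y)) dμ1(x)` is convex and
continuously differentiable on `ℝ^A`. -/
theorem mcot_dual_convex_C1
    {X Y : Type*} [MetricSpace X] [CompactSpace X] [MeasurableSpace X] [BorelSpace X]
    [MetricSpace Y] [CompactSpace Y] [MeasurableSpace Y] [BorelSpace Y]
    (μ1 : Measure X) [IsProbabilityMeasure μ1] (μ2 : Measure Y) [IsProbabilityMeasure μ2]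
    (ε : ℝ) (hε : 0 < ε)
    (c : X × Y → ℝ) (hc : Continuous c) (hc0 : ∀ p, 0 ≤ c p)
    (A : ℕ) (f : Y → Fin A → ℝ) (hf : Continuous f)
    (J : (Fin A → ℝ) → ℝ)
    (hJ : ∀ ζ, J ζ = ∫ x, Real.log
      (∫ y, Real.exp ((∑ a, ζ a * f y a) - ε⁻¹ * c (x, y)) ∂μ2) ∂μ1) :
    ConvexOn ℝ Set.univ J ∧ ContDiff ℝ 1 J :=
  mcot_dual_convex_C1_general μ1 μ2 ε c hc A f hf J hJ
end
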